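/- Let φ be Lipschitz with respect to |·| × d_r and let φ_k be its mollified approximation (as in the construction with mollification parameter ε = 1/k and k sample points). Then for every x ∈ ℝ^d and μ ∈ P₂(ℝ^d), |Ẽ[ φ(x, (1/k)∑ᵢδ_{X̃_i}) ] − φ_k(x, μ)| ≤ C/k, where C depends only on the Lipschitz constant of φ. -/

import Mathlib

open MeasureTheory
open scoped ENNReal

/-- The r-Wasserstein distance. -/
noncomputable def wassersteinDist {d : ℕ} (r : ℝ)
    (μ ν : Measure (EuclideanSpace ℝ (Fin d))) : ℝ :=
  sInf { c | ∃ γ : Measure (EuclideanSpace ℝ (Fin d) × EuclideanSpace ℝ (Fin d)),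
    γ.map Prod.fst = μ ∧ γ.map Prod.snd = ν ∧
    c = (∫ p, dist p.1 p.2 ^ r ∂γ) ^ (1 / r) }

/-- A Borel probability measure with finite second moment. -/
def IsP2 {d : ℕ} (μ : Measure (EuclideanSpace ℝ (Fin d))) : Prop :=
  IsProbabilityMeasure μ ∧ MemLp (fun x : EuclideanSpace ℝ (Fin d) => x) 2 μ

/-- The empirical measure `(1/k) ∑ᵢ δ_{x_i}`. -/
noncomputable def empiricalMeasure {d k : ℕ} (x : Fin k → EuclideanSpace ℝ (Fin d)) :
    Measure (EuclideanSpace ℝ (Fin d)) :=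
  (k : ℝ≥0∞)⁻¹ • ∑ i, Measure.dirac (x i)

/-- The unnormalized standard bump `exp(1/(|x|²−1))` on the unit ball. -/
noncomputable def bump {d : ℕ} (x : EuclideanSpace ℝ (Fin d)) : ℝ :=
  if ‖x‖ < 1 then Real.exp (1 / (‖x‖ ^ 2 - 1)) else 0

/-- The normalization constant of the standard mollifier. -/
noncomputable def bumpConst (d : ℕ) : ℝ := (∫ x, bump x ∂(volume : Measure (EuclideanSpace ℝ (Fin d))))⁻¹

/-- The standard mollifier `η_ε(x) = ε^{−d} η(x/ε)`, normalized to integrate to 1. -/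
noncomputable def stdMollifier (d : ℕ) (ε : ℝ) (x : EuclideanSpace ℝ (Fin d)) : ℝ :=
  ε ^ (-(d : ℤ)) * bumpConst d * bump (ε⁻¹ • x)

/-- The mollified finite-dimensional projection
`h_{k,ε}(x₀,…,x_k) = ∫ φ(x₀−y₀, (1/k)∑δ_{x_i−y_i}) η_ε(y₀)⋯η_ε(y_k) dy`. -/
noncomputable def mollifiedH (d k : ℕ) (ε : ℝ)
    (φ : EuclideanSpace ℝ (Fin d) → Measure (EuclideanSpace ℝ (Fin d)) → ℝ)
    (x₀ : EuclideanSpace ℝ (Fin d)) (xs : Fin k → EuclideanSpace ℝ (Fin d)) : ℝ :=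
  ∫ y₀, (∫ ys : Fin k → EuclideanSpace ℝ (Fin d),
      (φ (x₀ - y₀) (empiricalMeasure fun i => xs i - ys i) *
        ∏ i, stdMollifier d ε (ys i)) ∂(Measure.pi fun _ => (volume : Measure (EuclideanSpace ℝ (Fin d))))) *
    stdMollifier d ε y₀ ∂(volume : Measure (EuclideanSpace ℝ (Fin d)))

/-- The approximation `φ_k(x,μ) = Ẽ[h_{k,1/k}(x, X̃₁,…,X̃_k)]` where `X̃₁,…,X̃_k` are
i.i.d. with law `μ` (written as an integral against the product measure `μ^{⊗k}`). -/
noncomputable def mollifiedApprox (d k : ℕ)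
    (φ : EuclideanSpace ℝ (Fin d) → Measure (EuclideanSpace ℝ (Fin d)) → ℝ)
    (x : EuclideanSpace ℝ (Fin d)) (μ : Measure (EuclideanSpace ℝ (Fin d))) : ℝ :=
  ∫ Xs : Fin k → EuclideanSpace ℝ (Fin d), mollifiedH d k (1 / k) φ x Xs
    ∂(Measure.pi fun _ => μ)

lemma bump_eq {d : ℕ} (x : EuclideanSpace ℝ (Fin d)) :
    bump x = expNegInvGlue (1 - ‖x‖ ^ 2) := by
  rw [bump, expNegInvGlue]
  rcases lt_or_ge (‖x‖) 1 with h | h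
  · have h2 : (0:ℝ) < 1 - ‖x‖ ^ 2 := by nlinarith [norm_nonneg x]
    rw [if_pos h, if_neg (by linarith)]
    congr 1
    rw [one_div, ← inv_neg, neg_sub]
  · have h2 : 1 - ‖x‖ ^ 2 ≤ 0 := by nlinarith [norm_nonneg x]
    rw [if_neg (not_lt.2 h), if_pos h2]

lemma bump_continuous {d : ℕ} : Continuous (bump (d := d)) := by
  simp only [funext bump_eq]
  exact (expNegInvGlue.contDiff (n := 1)).continuous.comp (by continuity)

lemma bump_nonneg {d : ℕ} (x : EuclideanSpace ℝ (Fin d)) : 0 ≤ bump x := by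
  rw [bump_eq]; exact expNegInvGlue.nonneg _

lemma bump_eq_zero {d : ℕ} {x : EuclideanSpace ℝ (Fin d)} (h : 1 ≤ ‖x‖) : bump x = 0 := by
  rw [bump, if_neg (not_lt.2 h)]

lemma bump_integrable {d : ℕ} : Integrable (bump (d := d)) := by
  apply bump_continuous.integrable_of_hasCompactSupport
  apply HasCompactSupport.intro (isCompact_closedBall (0 : EuclideanSpace ℝ (Fin d)) 1)
  intro x hx
  simp only [Metric.mem_closedBall, dist_zero_right, not_le] at hx
  exact bump_eq_zero hx.le

lemma bump_integral_pos {d : ℕ} :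
    0 < ∫ x, bump x ∂(volume : Measure (EuclideanSpace ℝ (Fin d))) := by
  rw [integral_pos_iff_support_of_nonneg bump_nonneg bump_integrable]
  have hsub : Metric.ball (0 : EuclideanSpace ℝ (Fin d)) 1 ⊆ Function.support bump := by
    intro x hx
    simp only [Metric.mem_ball, dist_zero_right] at hx
    simp only [Function.mem_support, bump, if_pos hx]
    positivity
  exact lt_of_lt_of_le (Metric.measure_ball_pos volume 0 one_pos) (measure_mono hsub)

lemma bumpConst_pos (d : ℕ) : 0 < bumpConst d := inv_pos.2 bump_integral_pos

lemma stdMollifier_nonneg {d : ℕ} {ε : ℝ} (hε : 0 < ε) (x : EuclideanSpace ℝ (Fin d)) :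
    0 ≤ stdMollifier d ε x := by
  have h1 : (0:ℝ) < ε ^ (-(d:ℤ)) := zpow_pos hε _
  exact mul_nonneg (mul_nonneg h1.le (bumpConst_pos d).le) (bump_nonneg _)

lemma stdMollifier_continuous {d : ℕ} (ε : ℝ) : Continuous (stdMollifier d ε) :=
  continuous_const.mul (bump_continuous.comp (continuous_const_smul _))

lemma stdMollifier_eq_zero {d : ℕ} {ε : ℝ} (hε : 0 < ε) {x : EuclideanSpace ℝ (Fin d)}
    (h : ε ≤ ‖x‖) : stdMollifier d ε x = 0 := by
  have : (1:ℝ) ≤ ‖ε⁻¹ • x‖ := by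
    rw [norm_smul, norm_inv, Real.norm_eq_abs, abs_of_pos hε,
      ← div_eq_inv_mul, le_div_iff₀ hε, one_mul]
    exact h
  rw [stdMollifier, bump_eq_zero this, mul_zero]

lemma stdMollifier_norm_lt {d : ℕ} {ε : ℝ} (hε : 0 < ε) {x : EuclideanSpace ℝ (Fin d)}
    (h : stdMollifier d ε x ≠ 0) : ‖x‖ ≤ ε := by
  by_contra hc
  exact h (stdMollifier_eq_zero hε (not_le.1 hc).le)

lemma stdMollifier_integral {d : ℕ} {ε : ℝ} (hε : 0 < ε) :
    ∫ x, stdMollifier d ε x ∂(volume : Measure (EuclideanSpace ℝ (Fin d))) = 1 := by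
  have h := Measure.integral_comp_inv_smul_of_nonneg (volume : Measure (EuclideanSpace ℝ (Fin d)))
    bump hε.le
  have hI := bump_integral_pos (d := d)
  simp only [stdMollifier, mul_assoc]
  rw [integral_const_mul, integral_const_mul, h, smul_eq_mul, bumpConst,
    finrank_euclideanSpace, Fintype.card_fin, zpow_neg, zpow_natCast]
  field_simp

lemma stdMollifier_integrable {d : ℕ} {ε : ℝ} (hε : 0 < ε) :
    Integrable (stdMollifier d ε) (volume : Measure (EuclideanSpace ℝ (Fin d))) := by
  apply (stdMollifier_continuous ε).integrable_of_hasCompactSupport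
  apply HasCompactSupport.intro (isCompact_closedBall (0 : EuclideanSpace ℝ (Fin d)) ε)
  intro x hx
  simp only [Metric.mem_closedBall, dist_zero_right, not_le] at hx
  exact stdMollifier_eq_zero hε hx.le

section Aux
variable {d k : ℕ}
local notation "E" => EuclideanSpace ℝ (Fin d)

lemma integrable_dirac' {α : Type*} [MeasurableSpace α] [MeasurableSingletonClass α]
    (f : α → ℝ) (a : α) : Integrable f (Measure.dirac a) :=
  (integrable_const (f a)).congr (ae_eq_dirac f).symm

lemma integral_smul_sum_dirac {α : Type*} [MeasurableSpace α] [MeasurableSingletonClass α]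
    {k : ℕ} (p : Fin k → α) (f : α → ℝ) :
    ∫ a, f a ∂((k : ℝ≥0∞)⁻¹ • ∑ i, Measure.dirac (p i)) = (k : ℝ)⁻¹ * ∑ i, f (p i) := by
  rw [integral_smul_measure,
    integral_finset_sum_measure (fun i _ => integrable_dirac' f (p i))]
  simp [integral_dirac, smul_eq_mul]

lemma integral_empiricalMeasure (x : Fin k → E) (f : E → ℝ) :
    ∫ a, f a ∂(empiricalMeasure x) = (k : ℝ)⁻¹ * ∑ i, f (x i) :=
  integral_smul_sum_dirac x f

lemma empiricalMeasure_apply (x : Fin k → E) {s : Set E} (hs : MeasurableSet s) :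
    empiricalMeasure x s = (k : ℝ≥0∞)⁻¹ * ∑ i, s.indicator 1 (x i) := by
  simp [empiricalMeasure, Measure.smul_apply, Measure.finset_sum_apply,
    Measure.dirac_apply' _ hs, smul_eq_mul]

lemma empiricalMeasure_isProb (hk : 0 < k) (x : Fin k → E) :
    IsProbabilityMeasure (empiricalMeasure x) := by
  constructor
  rw [empiricalMeasure_apply x MeasurableSet.univ]
  simp only [Set.indicator_univ, Pi.one_apply, Finset.sum_const, Finset.card_univ,
    Fintype.card_fin, nsmul_eq_mul, mul_one]
  rw [ENNReal.inv_mul_cancel (by exact_mod_cast hk.ne') (ENNReal.natCast_ne_top k)]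

lemma isP2_empiricalMeasure (hk : 0 < k) (x : Fin k → E) : IsP2 (empiricalMeasure x) := by
  have hp := empiricalMeasure_isProb hk x
  refine ⟨hp, ?_⟩
  have hms : MeasurableSet {a : E | ¬ ‖a‖ ≤ ∑ i, ‖x i‖} :=
    ((isClosed_le continuous_norm continuous_const).measurableSet).compl
  refine MemLp.of_bound aestronglyMeasurable_id (∑ i, ‖x i‖) ?_
  rw [ae_iff]
  rw [empiricalMeasure_apply x hms]
  have hzero : ∀ i, ({a : E | ¬ ‖a‖ ≤ ∑ j, ‖x j‖}).indicator (1 : E → ℝ≥0∞) (x i) = 0 := by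
    intro i
    apply Set.indicator_of_notMem
    simp only [Set.mem_setOf_eq, not_not]
    exact Finset.single_le_sum (fun j _ => norm_nonneg (x j)) (Finset.mem_univ i)
  simp only [hzero, Finset.sum_const_zero, mul_zero]
  -- leftover side goals


lemma map_coupling_fst (x y : Fin k → E) :
    (((k : ℝ≥0∞)⁻¹ • ∑ i, Measure.dirac (x i, y i)).map Prod.fst) = empiricalMeasure x := by
  ext s hs
  rw [Measure.map_apply measurable_fst hs, empiricalMeasure_apply x hs]
  simp only [Measure.smul_apply, Measure.finset_sum_apply,
    Measure.dirac_apply' _ (measurable_fst hs), Measure.dirac_apply' _ hs, smul_eq_mul]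
  exact congrArg _ (Finset.sum_congr rfl fun i _ => by
    by_cases hmem : x i ∈ s <;> simp [Set.indicator, Set.mem_preimage, hmem])

lemma map_coupling_snd (x y : Fin k → E) :
    (((k : ℝ≥0∞)⁻¹ • ∑ i, Measure.dirac (x i, y i)).map Prod.snd) = empiricalMeasure y := by
  ext s hs
  rw [Measure.map_apply measurable_snd hs, empiricalMeasure_apply y hs]
  simp only [Measure.smul_apply, Measure.finset_sum_apply,
    Measure.dirac_apply' _ (measurable_snd hs), Measure.dirac_apply' _ hs, smul_eq_mul]
  exact congrArg _ (Finset.sum_congr rfl fun i _ => by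
    by_cases hmem : y i ∈ s <;> simp [Set.indicator, Set.mem_preimage, hmem])

lemma wassersteinDist_nonneg (r : ℝ) (μ ν : Measure E) : 0 ≤ wassersteinDist r μ ν := by
  apply Real.sInf_nonneg
  rintro c ⟨γ, -, -, rfl⟩
  exact Real.rpow_nonneg (integral_nonneg fun p => Real.rpow_nonneg dist_nonneg _) _

lemma wassersteinDist_empirical_le {r : ℝ} (hr : 1 ≤ r) (hk : 0 < k)
    (x y : Fin k → E) {D : ℝ} (hD : 0 ≤ D) (h : ∀ i, dist (x i) (y i) ≤ D) :
    wassersteinDist r (empiricalMeasure x) (empiricalMeasure y) ≤ D := by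
  have hr0 : 0 < r := lt_of_lt_of_le one_pos hr
  set γ : Measure (E × E) := (k : ℝ≥0∞)⁻¹ • ∑ i, Measure.dirac (x i, y i) with hγ
  have hmem : (∫ p, dist p.1 p.2 ^ r ∂γ) ^ (1 / r) ∈
      { c | ∃ γ : Measure (E × E),
        γ.map Prod.fst = empiricalMeasure x ∧ γ.map Prod.snd = empiricalMeasure y ∧
        c = (∫ p, dist p.1 p.2 ^ r ∂γ) ^ (1 / r) } :=
    ⟨γ, map_coupling_fst x y, map_coupling_snd x y, rfl⟩
  have hbdd : BddBelow { c | ∃ γ : Measure (E × E),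
        γ.map Prod.fst = empiricalMeasure x ∧ γ.map Prod.snd = empiricalMeasure y ∧
        c = (∫ p, dist p.1 p.2 ^ r ∂γ) ^ (1 / r) } := by
    refine ⟨0, ?_⟩
    rintro c ⟨γ', -, -, rfl⟩
    exact Real.rpow_nonneg (integral_nonneg fun p => Real.rpow_nonneg dist_nonneg _) _
  refine le_trans (csInf_le hbdd hmem) ?_
  have hint : ∫ p, dist p.1 p.2 ^ r ∂γ = (k : ℝ)⁻¹ * ∑ i, dist (x i) (y i) ^ r := by
    rw [hγ]
    exact integral_smul_sum_dirac (fun i => (x i, y i)) (fun p => dist p.1 p.2 ^ r)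
  have hle : ∫ p, dist p.1 p.2 ^ r ∂γ ≤ D ^ r := by
    rw [hint]
    have : ∑ i, dist (x i) (y i) ^ r ≤ (k : ℝ) * D ^ r := by
      calc ∑ i, dist (x i) (y i) ^ r ≤ ∑ _i : Fin k, D ^ r :=
            Finset.sum_le_sum fun i _ => Real.rpow_le_rpow dist_nonneg (h i) hr0.le
        _ = (k : ℝ) * D ^ r := by simp [Finset.sum_const, nsmul_eq_mul]
    calc (k : ℝ)⁻¹ * ∑ i, dist (x i) (y i) ^ r ≤ (k : ℝ)⁻¹ * ((k : ℝ) * D ^ r) := by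
          apply mul_le_mul_of_nonneg_left this (by positivity)
      _ = D ^ r := by
          rw [← mul_assoc, inv_mul_cancel₀ (by exact_mod_cast hk.ne'), one_mul]
  calc (∫ p, dist p.1 p.2 ^ r ∂γ) ^ (1 / r)
      ≤ (D ^ r) ^ (1 / r) :=
        Real.rpow_le_rpow (integral_nonneg fun p => Real.rpow_nonneg dist_nonneg _) hle
          (by positivity)
    _ = D := by
        rw [← Real.rpow_mul hD, mul_one_div, div_self hr0.ne', Real.rpow_one]
end Aux

section WB
variable {α : Type*} [MeasurableSpace α] {ρ : Measure α} {f g w : α → ℝ} {c : ℝ}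

lemma weighted_bound (hw0 : ∀ a, 0 ≤ w a) (hw1 : ∫ a, w a ∂ρ = 1)
    (hint : Integrable (fun a => f a * w a) ρ) (hwint : Integrable w ρ)
    (hc : ∀ a, w a ≠ 0 → |f a| ≤ c) :
    |∫ a, f a * w a ∂ρ| ≤ c := by
  have h1 : |∫ a, f a * w a ∂ρ| ≤ ∫ a, |f a * w a| ∂ρ := by
    simpa only [Real.norm_eq_abs] using norm_integral_le_integral_norm (fun a => f a * w a) (μ := ρ)
  have h2 : ∫ a, |f a * w a| ∂ρ ≤ ∫ a, c * w a ∂ρ := by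
    apply integral_mono hint.abs (hwint.const_mul c)
    intro a
    show |f a * w a| ≤ c * w a
    rcases eq_or_ne (w a) 0 with h | h
    · simp [h]
    · rw [abs_mul, abs_of_nonneg (hw0 a)]
      exact mul_le_mul_of_nonneg_right (hc a h) (hw0 a)
  rw [integral_const_mul, hw1, mul_one] at h2
  exact le_trans h1 h2

lemma weighted_diff_bound (hw0 : ∀ a, 0 ≤ w a) (hw1 : ∫ a, w a ∂ρ = 1)
    (hf : Integrable (fun a => f a * w a) ρ) (hg : Integrable (fun a => g a * w a) ρ)
    (hwint : Integrable w ρ)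
    (hc : ∀ a, w a ≠ 0 → |f a - g a| ≤ c) :
    |(∫ a, f a * w a ∂ρ) - ∫ a, g a * w a ∂ρ| ≤ c := by
  have heq : (∫ a, f a * w a ∂ρ) - ∫ a, g a * w a ∂ρ = ∫ a, (f a - g a) * w a ∂ρ := by
    rw [← integral_sub hf hg]
    apply integral_congr_ae (Filter.Eventually.of_forall fun a => ?_)
    ring
  rw [heq]
  exact weighted_bound hw0 hw1
    ((hf.sub hg).congr (Filter.Eventually.of_forall fun a => by simp only [Pi.sub_apply]; ring)) hwint hc

lemma weighted_const_diff_bound {c₀ : ℝ} (hw0 : ∀ a, 0 ≤ w a) (hw1 : ∫ a, w a ∂ρ = 1)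
    (hf : Integrable (fun a => f a * w a) ρ) (hwint : Integrable w ρ)
    (hc : ∀ a, w a ≠ 0 → |f a - c₀| ≤ c) :
    |(∫ a, f a * w a ∂ρ) - c₀| ≤ c := by
  have h := weighted_diff_bound (g := fun _ => c₀) hw0 hw1 hf (hwint.const_mul c₀) hwint hc
  rwa [integral_const_mul, hw1, mul_one] at h

end WB

lemma pi_map_eval {ι : Type*} [Fintype ι] [DecidableEq ι] {α : ι → Type*} [∀ i, MeasurableSpace (α i)]
    (μ : ∀ i, Measure (α i)) [∀ i, IsProbabilityMeasure (μ i)] (i : ι) :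
    (Measure.pi μ).map (Function.eval i) = μ i := by
  ext s hs
  rw [Measure.map_apply (measurable_pi_apply i) hs, Set.eval_preimage, Measure.pi_pi]
  rw [Finset.prod_eq_single i]
  · simp
  · intro j _ hj
    simp [Function.update_of_ne hj]
  · simp


section Core
variable {d k : ℕ} {r : ℝ} {φ : EuclideanSpace ℝ (Fin d) → Measure (EuclideanSpace ℝ (Fin d)) → ℝ}
  {L : ℝ}

lemma phi_emp_diff_le (hr : 1 ≤ r) (hk : 0 < k) (hL : 0 ≤ L)
    (hφ : ∀ x y : EuclideanSpace ℝ (Fin d), ∀ μ ν, IsP2 μ → IsP2 ν →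
      |φ x μ - φ y ν| ≤ L * (dist x y + wassersteinDist r μ ν))
    (z w : EuclideanSpace ℝ (Fin d)) (As Bs : Fin k → EuclideanSpace ℝ (Fin d)) {c : ℝ}
    (hc0 : 0 ≤ c) (hc : ∀ i, dist (As i) (Bs i) ≤ c) :
    |φ z (empiricalMeasure As) - φ w (empiricalMeasure Bs)| ≤ L * (dist z w + c) := by
  refine le_trans (hφ z w _ _ (isP2_empiricalMeasure hk As) (isP2_empiricalMeasure hk Bs)) ?_
  have hW := wassersteinDist_empirical_le hr hk As Bs hc0 hc
  have h2 : dist z w + wassersteinDist r (empiricalMeasure As) (empiricalMeasure Bs)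
      ≤ dist z w + c := by linarith
  exact mul_le_mul_of_nonneg_left h2 hL

lemma mollifiedH_core (hr : 1 ≤ r) (hk : 0 < k) (hL : 0 ≤ L)
    (hφ : ∀ x y : EuclideanSpace ℝ (Fin d), ∀ μ ν, IsP2 μ → IsP2 ν →
      |φ x μ - φ y ν| ≤ L * (dist x y + wassersteinDist r μ ν))
    {ε : ℝ} (hε : 0 < ε) (x : EuclideanSpace ℝ (Fin d)) :
    (∀ Xs, |φ x (empiricalMeasure Xs) - mollifiedH d k ε φ x Xs| ≤ 2 * L * ε) ∧
    LipschitzWith L.toNNReal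
      (fun Xs : Fin k → EuclideanSpace ℝ (Fin d) => mollifiedH d k ε φ x Xs) := by
  classical
  have hm0 : ∀ y : EuclideanSpace ℝ (Fin d), 0 ≤ stdMollifier d ε y := stdMollifier_nonneg hε
  have hm1 : ∫ y, stdMollifier d ε y = 1 := stdMollifier_integral hε
  have hmint := stdMollifier_integrable (d := d) hε
  have hmcont := stdMollifier_continuous (d := d) ε
  have hmcs : HasCompactSupport (stdMollifier d ε) := by
    apply HasCompactSupport.intro (isCompact_closedBall (0 : EuclideanSpace ℝ (Fin d)) ε)
    intro y hy
    simp only [Metric.mem_closedBall, dist_zero_right, not_le] at hy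
    exact stdMollifier_eq_zero hε hy.le
  set pim : Measure (Fin k → EuclideanSpace ℝ (Fin d)) := Measure.pi fun _ => volume with hpim
  have hpimvol : pim = (volume : Measure (Fin k → EuclideanSpace ℝ (Fin d))) := volume_pi.symm
  set W : (Fin k → EuclideanSpace ℝ (Fin d)) → ℝ := fun ys => ∏ i, stdMollifier d ε (ys i)
    with hWdef
  have hWcont : Continuous W :=
    continuous_finset_prod _ fun i _ => hmcont.comp (continuous_apply i)
  have hW0 : ∀ ys, 0 ≤ W ys := fun ys => Finset.prod_nonneg fun i _ => hm0 _
  have hWsupp : ∀ ys, W ys ≠ 0 → ∀ i, ‖ys i‖ ≤ ε := by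
    intro ys h i
    exact stdMollifier_norm_lt hε (Finset.prod_ne_zero_iff.1 h i (Finset.mem_univ i))
  have hWcs : HasCompactSupport W := by
    apply HasCompactSupport.intro
      (isCompact_closedBall (0 : Fin k → EuclideanSpace ℝ (Fin d)) ε)
    intro ys hys
    by_contra h
    apply hys
    simp only [Metric.mem_closedBall, dist_zero_right]
    exact (pi_norm_le_iff_of_nonneg hε.le).2 (hWsupp ys h)
  have hWint : Integrable W pim := by
    rw [hpimvol]; exact hWcont.integrable_of_hasCompactSupport hWcs
  have hW1 : ∫ ys, W ys ∂pim = 1 := by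
    rw [hpimvol, hWdef]
    rw [MeasureTheory.integral_fintype_prod_volume_eq_prod (fun (_ : Fin k) => stdMollifier d ε)]
    simp [hm1]
  have hFcont : ∀ (z : EuclideanSpace ℝ (Fin d)) (As : Fin k → EuclideanSpace ℝ (Fin d)),
      Continuous fun ys : Fin k → EuclideanSpace ℝ (Fin d) =>
        φ z (empiricalMeasure fun i => As i - ys i) := by
    intro z As
    refine (LipschitzWith.of_dist_le_mul (K := L.toNNReal) fun a b => ?_).continuous
    rw [Real.dist_eq, Real.coe_toNNReal L hL]
    have h := phi_emp_diff_le hr hk hL hφ z z (fun i => As i - a i) (fun i => As i - b i)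
      dist_nonneg (fun i => by rw [dist_sub_left]; exact dist_le_pi_dist a b i)
    simpa [dist_self] using h
  have hFWint : ∀ (z : EuclideanSpace ℝ (Fin d)) (As : Fin k → EuclideanSpace ℝ (Fin d)),
      Integrable (fun ys => φ z (empiricalMeasure fun i => As i - ys i) * W ys) pim := by
    intro z As
    rw [hpimvol]
    exact ((hFcont z As).mul hWcont).integrable_of_hasCompactSupport hWcs.mul_left
  set GG : (Fin k → EuclideanSpace ℝ (Fin d)) → EuclideanSpace ℝ (Fin d) → ℝ :=
    fun Xs y₀ => ∫ ys, φ (x - y₀) (empiricalMeasure fun i => Xs i - ys i) * W ys ∂pim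
    with hGGdef
  have hGdiff : ∀ (Xs Ys : Fin k → EuclideanSpace ℝ (Fin d)) (a b : EuclideanSpace ℝ (Fin d)),
      |GG Xs a - GG Ys b| ≤ L * (dist a b + dist Xs Ys) := by
    intro Xs Ys a b
    apply weighted_diff_bound hW0 hW1 (hFWint _ _) (hFWint _ _) hWint
    intro ys _
    have h := phi_emp_diff_le hr hk hL hφ (x - a) (x - b)
      (fun i => Xs i - ys i) (fun i => Ys i - ys i) dist_nonneg
      (fun i => by rw [dist_sub_right]; exact dist_le_pi_dist Xs Ys i)
    rwa [dist_sub_left] at h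
  have hGconst : ∀ (Xs : Fin k → EuclideanSpace ℝ (Fin d)) (y₀ : EuclideanSpace ℝ (Fin d)),
      |GG Xs y₀ - φ x (empiricalMeasure Xs)| ≤ L * (‖y₀‖ + ε) := by
    intro Xs y₀
    apply weighted_const_diff_bound hW0 hW1 (hFWint _ _) hWint
    intro ys hys
    have h1 : ∀ i, dist (Xs i - ys i) (Xs i) ≤ ε := fun i => by
      rw [dist_eq_norm, sub_sub_cancel_left, norm_neg]
      exact hWsupp ys hys i
    have h := phi_emp_diff_le hr hk hL hφ (x - y₀) x (fun i => Xs i - ys i) Xs hε.le h1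
    have h2 : dist (x - y₀) x = ‖y₀‖ := by rw [dist_eq_norm, sub_sub_cancel_left, norm_neg]
    rwa [h2] at h
  have hGcont : ∀ Xs, Continuous (GG Xs) := by
    intro Xs
    refine (LipschitzWith.of_dist_le_mul (K := L.toNNReal) fun a b => ?_).continuous
    rw [Real.dist_eq, Real.coe_toNNReal L hL]
    have h := hGdiff Xs Xs a b
    simpa [dist_self] using h
  have houter : ∀ Xs, Integrable (fun y₀ => GG Xs y₀ * stdMollifier d ε y₀)
      (volume : Measure (EuclideanSpace ℝ (Fin d))) := by
    intro Xs
    exact ((hGcont Xs).mul hmcont).integrable_of_hasCompactSupport hmcs.mul_left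
  have hmoll : ∀ Xs, mollifiedH d k ε φ x Xs = ∫ y₀, GG Xs y₀ * stdMollifier d ε y₀ := by
    intro Xs
    rfl
  constructor
  · intro Xs
    rw [abs_sub_comm, hmoll]
    have hb : ∀ y₀, stdMollifier d ε y₀ ≠ 0 →
        |GG Xs y₀ - φ x (empiricalMeasure Xs)| ≤ 2 * L * ε := by
      intro y₀ hy₀
      have hn : ‖y₀‖ ≤ ε := stdMollifier_norm_lt hε hy₀
      refine le_trans (hGconst Xs y₀) ?_
      have : ‖y₀‖ + ε ≤ ε + ε := by linarith
      calc L * (‖y₀‖ + ε) ≤ L * (ε + ε) := mul_le_mul_of_nonneg_left this hL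
        _ = 2 * L * ε := by ring
    exact weighted_const_diff_bound hm0 hm1 (houter Xs) hmint hb
  · refine LipschitzWith.of_dist_le_mul fun Xs Ys => ?_
    rw [Real.dist_eq, Real.coe_toNNReal L hL, hmoll, hmoll]
    apply weighted_diff_bound hm0 hm1 (houter Xs) (houter Ys) hmint
    intro y₀ _
    have h := hGdiff Xs Ys y₀ y₀
    simpa [dist_self] using h

end Core
/-- If `φ` is Lipschitz with respect to `|·| × d_r` and `φ_k` is its
mollified approximation (mollification parameter `ε = 1/k`, `k` sample points), then
for every `x ∈ ℝ^d` and `μ ∈ P₂(ℝ^d)`,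
`|Ẽ[φ(x, (1/k)∑δ_{X̃ᵢ})] − φ_k(x,μ)| ≤ C/k`, where `C` depends only on the Lipschitz
constant of `φ`. -/
theorem mollifiedApprox_sampling_error
    (d : ℕ) (r : ℝ) (hr1 : 1 ≤ r) (hr2 : r ≤ 2)
    (φ : EuclideanSpace ℝ (Fin d) → Measure (EuclideanSpace ℝ (Fin d)) → ℝ) (L : ℝ)
    (hφ : ∀ x y : EuclideanSpace ℝ (Fin d),
      ∀ μ ν : Measure (EuclideanSpace ℝ (Fin d)), IsP2 μ → IsP2 ν →
      |φ x μ - φ y ν| ≤ L * (dist x y + wassersteinDist r μ ν)) :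
    ∃ C : ℝ, 0 ≤ C ∧ ∀ k : ℕ, 0 < k →
      ∀ x : EuclideanSpace ℝ (Fin d), ∀ μ : Measure (EuclideanSpace ℝ (Fin d)), IsP2 μ →
      |(∫ Xs : Fin k → EuclideanSpace ℝ (Fin d), φ x (empiricalMeasure Xs)
          ∂(Measure.pi fun _ => μ)) - mollifiedApprox d k φ x μ| ≤ C / k := by
  classical
  set L' : ℝ := max L 0 with hL'def
  have hL' : 0 ≤ L' := le_max_right L 0
  have hφ' : ∀ x y : EuclideanSpace ℝ (Fin d), ∀ μ ν, IsP2 μ → IsP2 ν →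
      |φ x μ - φ y ν| ≤ L' * (dist x y + wassersteinDist r μ ν) := by
    intro x y μ ν hμ hν
    refine le_trans (hφ x y μ ν hμ hν) ?_
    apply mul_le_mul_of_nonneg_right (le_max_left L 0)
    have h1 := wassersteinDist_nonneg r μ ν
    have h2 := dist_nonneg (x := x) (y := y)
    linarith
  refine ⟨2 * L', by positivity, ?_⟩
  intro k hk x μ hμ
  haveI : IsProbabilityMeasure μ := hμ.1
  have hkR : (0:ℝ) < (k:ℝ) := by exact_mod_cast hk
  have hε : (0:ℝ) < 1 / (k:ℝ) := by positivity
  obtain ⟨hclose, hlip⟩ := mollifiedH_core hr1 hk hL' hφ' hε x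
  set f : (Fin k → EuclideanSpace ℝ (Fin d)) → ℝ := fun Xs => φ x (empiricalMeasure Xs)
    with hfdef
  set g : (Fin k → EuclideanSpace ℝ (Fin d)) → ℝ := fun Xs => mollifiedH d k (1 / k) φ x Xs
    with hgdef
  have hfg : ∀ Xs, |f Xs - g Xs| ≤ 2 * L' * (1 / (k:ℝ)) := hclose
  have hfcont : Continuous f := by
    refine (LipschitzWith.of_dist_le_mul (K := L'.toNNReal) fun a b => ?_).continuous
    rw [Real.dist_eq, Real.coe_toNNReal L' hL']
    have h := phi_emp_diff_le hr1 hk hL' hφ' x x a b dist_nonneg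
      (fun i => dist_le_pi_dist a b i)
    simpa [dist_self] using h
  have hgcont : Continuous g := hlip.continuous
  have hid : Integrable (fun a : EuclideanSpace ℝ (Fin d) => a) μ :=
    memLp_one_iff_integrable.1 (hμ.2.mono_exponent (by norm_num))
  have hnormint : ∀ i : Fin k,
      Integrable (fun Xs : Fin k → EuclideanSpace ℝ (Fin d) => ‖Xs i‖)
        (Measure.pi fun _ => μ) := by
    intro i
    have hmap := pi_map_eval (fun _ : Fin k => μ) i
    have h1 : Integrable (fun a : EuclideanSpace ℝ (Fin d) => ‖a‖)
        ((Measure.pi fun _ : Fin k => μ).map (Function.eval i)) := by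
      rw [hmap]; exact hid.norm
    exact (integrable_map_measure continuous_norm.aestronglyMeasurable
      (measurable_pi_apply i).aemeasurable).1 h1
  have hsumint : Integrable
      (fun Xs : Fin k → EuclideanSpace ℝ (Fin d) => ∑ i, ‖Xs i‖) (Measure.pi fun _ => μ) :=
    integrable_finset_sum _ fun i _ => hnormint i
  have hfbound : ∀ Xs : Fin k → EuclideanSpace ℝ (Fin d),
      |f Xs| ≤ |φ x (empiricalMeasure (0 : Fin k → EuclideanSpace ℝ (Fin d)))|
        + L' * ∑ i, ‖Xs i‖ := by
    intro Xs
    have hc0 : (0:ℝ) ≤ ∑ i, ‖Xs i‖ := Finset.sum_nonneg fun i _ => norm_nonneg _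
    have h := phi_emp_diff_le hr1 hk hL' hφ' x x Xs
      (0 : Fin k → EuclideanSpace ℝ (Fin d)) hc0
      (fun i => by
        simpa [dist_eq_norm] using
          Finset.single_le_sum (f := fun j => ‖Xs j‖)
            (fun j _ => norm_nonneg (Xs j)) (Finset.mem_univ i))
    rw [dist_self, zero_add] at h
    calc |f Xs|
        = |(f Xs - φ x (empiricalMeasure (0 : Fin k → EuclideanSpace ℝ (Fin d))))
            + φ x (empiricalMeasure (0 : Fin k → EuclideanSpace ℝ (Fin d)))| := by
          congr 1; ring
      _ ≤ |f Xs - φ x (empiricalMeasure (0 : Fin k → EuclideanSpace ℝ (Fin d)))|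
            + |φ x (empiricalMeasure (0 : Fin k → EuclideanSpace ℝ (Fin d)))| := abs_add_le _ _
      _ ≤ L' * (∑ i, ‖Xs i‖)
            + |φ x (empiricalMeasure (0 : Fin k → EuclideanSpace ℝ (Fin d)))| :=
          add_le_add_left h _
      _ = _ := by ring
  have hfint : Integrable f (Measure.pi fun _ => μ) := by
    have hmaj : Integrable (fun Xs : Fin k → EuclideanSpace ℝ (Fin d) =>
        |φ x (empiricalMeasure (0 : Fin k → EuclideanSpace ℝ (Fin d)))| + L' * ∑ i, ‖Xs i‖)
        (Measure.pi fun _ => μ) :=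
      (integrable_const _).add (hsumint.const_mul L')
    refine Integrable.mono' hmaj hfcont.aestronglyMeasurable ?_
    exact Filter.Eventually.of_forall fun Xs => by
      simpa [Real.norm_eq_abs] using hfbound Xs
  have hgint : Integrable g (Measure.pi fun _ => μ) := by
    refine Integrable.mono'
      (hfint.abs.add (integrable_const (2 * L' * (1 / (k:ℝ)))))
      hgcont.aestronglyMeasurable ?_
    refine Filter.Eventually.of_forall fun Xs => ?_
    rw [Real.norm_eq_abs]
    calc |g Xs| = |f Xs + (g Xs - f Xs)| := by congr 1; ring
      _ ≤ |f Xs| + |g Xs - f Xs| := abs_add_le _ _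
      _ = |f Xs| + |f Xs - g Xs| := by rw [abs_sub_comm]
      _ ≤ |f Xs| + 2 * L' * (1 / (k:ℝ)) := add_le_add_right (hfg Xs) _
  have key : |(∫ Xs, f Xs ∂(Measure.pi fun _ => μ))
      - ∫ Xs, g Xs ∂(Measure.pi fun _ => μ)| ≤ 2 * L' * (1 / (k:ℝ)) := by
    rw [← integral_sub hfint hgint]
    have h1 : |∫ Xs, (f Xs - g Xs) ∂(Measure.pi fun _ => μ)|
        ≤ ∫ Xs, |f Xs - g Xs| ∂(Measure.pi fun _ => μ) := by
      simpa only [Real.norm_eq_abs] using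
        norm_integral_le_integral_norm (μ := Measure.pi fun _ => μ) (fun Xs => f Xs - g Xs)
    refine h1.trans ?_
    have h2 : ∫ Xs, |f Xs - g Xs| ∂(Measure.pi fun _ => μ)
        ≤ ∫ _Xs, (2 * L' * (1 / (k:ℝ))) ∂(Measure.pi fun _ => μ) :=
      integral_mono (hfint.sub hgint).abs (integrable_const _) fun Xs => hfg Xs
    simpa [measure_univ] using h2
  have hApprox : mollifiedApprox d k φ x μ = ∫ Xs, g Xs ∂(Measure.pi fun _ => μ) := rfl
  rw [hApprox]
  refine key.trans (le_of_eq ?_)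
  rw [mul_one_div]
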